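/- arXiv:1304.6271 — 2 statements merged into one kernel-verified Lean document; each statement's English description precedes it below -/
import Mathlib

section
/- For all x, y ∈ X and t > 0 the heat kernel satisfies: (a) if x ≠ y then p(t,x,y) ≤ (t/d_*(x,y)) · N(x, 1/d_*(x,y)); (b) if x ≠ y then p(t,x,y) ≥ (1/(2e)) · (t/d_*(x,y)) · N(x, 1/(2 d_*(x,y))) whenever t ≤ d_*(x,y), and p(t,x,y) ≥ (1/(2e)) · N(x, 1/(2t)) whenever t ≥ d_*(x,y); (c) p(t,x,x) ≥ (1/e) · N(x, 1/t). -/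
open MeasureTheory Metric Filter
open scoped ENNReal Classical

/-- The averaging operator `Q_r f(x) = μ(B_r(x))⁻¹ ∫_{B_r(x)} f dμ`. -/
noncomputable def avgOp {X : Type*} [MetricSpace X] [MeasurableSpace X]
    (μ : Measure X) (r : ℝ) (f : X → ℝ) (x : X) : ℝ :=
  (μ (closedBall x r)).toReal⁻¹ * ∫ y in closedBall x r, f y ∂μ

/-- The isotropic Markov operator `P^t f(x) = ∫_[0,∞) Q_r f(x) dσ^t(r)`,
where `νt` is the Lebesgue–Stieltjes measure of `σ^t`. -/
noncomputable def isoOp {X : Type*} [MetricSpace X] [MeasurableSpace X]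
    (μ : Measure X) (νt : Measure ℝ) (f : X → ℝ) (x : X) : ℝ :=
  ∫ r in Set.Ici (0:ℝ), avgOp μ r f x ∂νt

/-- The heat kernel `p(t,x,y) = ∫_[d(x,y),∞) μ(B_r(x))⁻¹ dσ^t(r)`. -/
noncomputable def heatK {X : Type*} [MetricSpace X] [MeasurableSpace X]
    (μ : Measure X) (ν : ℝ → Measure ℝ) (t : ℝ) (x y : X) : ℝ≥0∞ :=
  ∫⁻ r in Set.Ici (dist x y), (μ (closedBall x r))⁻¹ ∂(ν t)

/-- The intrinsic ultra-metric `d_*(x,y) = 1/log(1/σ(d(x,y)))` for `x ≠ y`. -/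
noncomputable def dstar {X : Type*} [MetricSpace X] (σ : ℝ → ℝ) (x y : X) : ℝ :=
  if x = y then 0 else 1 / Real.log (1 / σ (dist x y))

/-- The closed ball `B*_s(x)` of the intrinsic ultra-metric. -/
def starBall {X : Type*} [MetricSpace X] (σ : ℝ → ℝ) (x : X) (s : ℝ) : Set X :=
  {y | dstar σ x y ≤ s}

/-- The spectral distribution function `N(x,τ) = 1/μ(B*_{1/τ}(x))`. -/
noncomputable def specN {X : Type*} [MetricSpace X] [MeasurableSpace X]
    (μ : Measure X) (σ : ℝ → ℝ) (x : X) (τ : ℝ) : ℝ≥0∞ :=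
  (μ (starBall σ x (1 / τ)))⁻¹

/-- The Green function `g(x,y) = ∫_0^∞ p(t,x,y) dt`. -/
noncomputable def greenF {X : Type*} [MetricSpace X] [MeasurableSpace X]
    (μ : Measure X) (ν : ℝ → Measure ℝ) (x y : X) : ℝ≥0∞ :=
  ∫⁻ t in Set.Ioi (0:ℝ), heatK μ ν t x y

/-! The integrand `r ↦ μ(B_r(x))⁻¹` of the heat kernel is non-increasing in `r`.

Upper bound: bound the integrand by its value at `r = d(x,y)`; since
`B_{d(x,y)}(x) = B*_{d_*(x,y)}(x)` and `ν_t[d,∞) ≤ 1 - σ(d)^t = 1 - e^{-t/d_*} ≤ t/d_*`, this is (a).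

Lower bounds: for `τ > 0` let `ρ ≥ a` be the last radius with `σ(ρ) ≤ e^{-τ}` (it exists because
`σ → 1` and `σ` is left-continuous). Then `B_ρ(x) ⊆ B*_{1/τ}(x)` and `ν_t[a,ρ] ≥ e^{-τt} - σ(a)^t`,
so `∫_{[a,∞)} μ(B_r(x))⁻¹ dσ^t(r) ≥ (e^{-τt} - σ(a)^t) N(x,τ)`. Taking `a = d(x,y)` with
`τ = 1/(2d_*)` or `τ = 1/(2t)`, and `a = 0` with `τ = 1/t`, gives (b) and (c) via
`e^{-u/2} - e^{-u} ≥ u/(2e)` for `0 ≤ u ≤ 1`. -/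

open Set

section SigmaFacts

variable {σ : ℝ → ℝ}

lemma sigma_zero (hσmono : StrictMonoOn σ (Ici 0)) (hσrange : ∀ r : ℝ, 0 ≤ r → σ r ∈ Icc 0 1)
    (hσzero : Tendsto σ (nhdsWithin 0 (Ioi 0)) (nhds 0)) : σ 0 = 0 := by
  refine le_antisymm (ge_of_tendsto hσzero ?_) (hσrange 0 le_rfl).1
  filter_upwards [self_mem_nhdsWithin] with r hr
  exact (hσmono self_mem_Ici (mem_Ici.2 hr.le) hr).le

lemma sigma_mem_Ioo (hσmono : StrictMonoOn σ (Ici 0)) (hσrange : ∀ r : ℝ, 0 ≤ r → σ r ∈ Icc 0 1)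
    (hσ0 : σ 0 = 0) {r : ℝ} (hr : 0 < r) : σ r ∈ Ioo 0 1 := by
  constructor
  · simpa [hσ0] using hσmono self_mem_Ici (mem_Ici.2 hr.le) hr
  · exact (hσmono (mem_Ici.2 hr.le) (mem_Ici.2 (by linarith)) (lt_add_one r)).trans_le
      (hσrange (r + 1) (by linarith)).2

end SigmaFacts

lemma exists_last_le_of_leftContinuous {f : ℝ → ℝ} {a θ : ℝ}
    (hlc : ∀ r, a < r → ContinuousWithinAt f (Iic r) r) (htop : ∀ᶠ r in atTop, θ < f r)
    (ha : f a ≤ θ) : ∃ ρ, a ≤ ρ ∧ f ρ ≤ θ ∧ ∀ r, ρ < r → θ < f r := by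
  set S := {r | a ≤ r ∧ f r ≤ θ}
  have hne : S.Nonempty := ⟨a, le_rfl, ha⟩
  have hbdd : BddAbove S := by
    obtain ⟨M, hM⟩ := eventually_atTop.1 htop
    exact ⟨M, fun r hr => not_lt.1 fun hMr => (hM r hMr.le).not_ge hr.2⟩
  have haρ : a ≤ sSup S := le_csSup hbdd ⟨le_rfl, ha⟩
  refine ⟨sSup S, haρ, ?_, fun r hr => not_le.1 fun hfr => ?_⟩
  · rcases haρ.eq_or_lt with h | h
    · rwa [← h]
    · exact ((hlc _ h).mono fun r hr => le_csSup hbdd hr).closure_le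
        (csSup_mem_closure hne hbdd) continuousWithinAt_const fun r hr => hr.2
  · exact hr.not_ge (le_csSup hbdd ⟨haρ.trans hr.le, hfr⟩)

section StieltjesMeasure

variable {ν : Measure ℝ} {F : ℝ → ℝ} {a : ℝ}

lemma measure_Ici_le_of_Ico (hν : ∀ b, a ≤ b → ν (Ico a b) = ENNReal.ofReal (F b - F a))
    (hF : ∀ b, a ≤ b → F b ≤ 1) : ν (Ici a) ≤ ENNReal.ofReal (1 - F a) := by
  refine le_of_tendsto (tendsto_measure_Ico_atTop ν a) ?_
  filter_upwards [eventually_ge_atTop a] with b hb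
  rw [hν b hb]
  exact ENNReal.ofReal_le_ofReal (by linarith [hF b hb])

lemma ofReal_sub_le_measure_Icc {ρ c : ℝ}
    (hν : ∀ b, ρ < b → ν (Ico a b) = ENNReal.ofReal (F b - F a)) (hc : ∀ b, ρ < b → c ≤ F b) :
    ENNReal.ofReal (c - F a) ≤ ν (Icc a ρ) := by
  have hIcc : ⋂ b > ρ, Ico a b = Icc a ρ := by
    ext r
    simp only [mem_iInter, mem_Ico, mem_Icc]
    refine ⟨fun h => ⟨(h (ρ + 1) (by linarith)).1, le_of_forall_gt fun b hb => (h b hb).2⟩,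
      fun h b hb => ⟨h.1, h.2.trans_lt hb⟩⟩
  have hlim := tendsto_measure_biInter_gt (μ := ν) (s := Ico a) (a := ρ)
    (fun _ _ => measurableSet_Ico.nullMeasurableSet)
    (fun _ _ _ hij => Ico_subset_Ico_right hij)
    ⟨ρ + 1, by linarith, by rw [hν _ (by linarith)]; exact ENNReal.ofReal_ne_top⟩
  rw [hIcc] at hlim
  refine ge_of_tendsto hlim ?_
  filter_upwards [self_mem_nhdsWithin] with b hb
  rw [Function.comp_apply, hν b hb]
  exact ENNReal.ofReal_le_ofReal (by linarith [hc b hb])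

end StieltjesMeasure

lemma mul_le_exp_neg_half_sub_exp_neg {u : ℝ} (hu0 : 0 ≤ u) (hu1 : u ≤ 1) :
    1 / (2 * Real.exp 1) * u ≤ Real.exp (-(u / 2)) - Real.exp (-u) := by
  have h1 : Real.exp (-1) ≤ Real.exp (-u) := Real.exp_le_exp.2 (by linarith)
  have h2 : u / 2 ≤ Real.exp (u / 2) - 1 := by linarith [Real.add_one_le_exp (u / 2)]
  calc 1 / (2 * Real.exp 1) * u = Real.exp (-1) * (u / 2) := by
        rw [Real.exp_neg]; field_simp
    _ ≤ Real.exp (-u) * (Real.exp (u / 2) - 1) := by gcongr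
    _ = Real.exp (-(u / 2)) - Real.exp (-u) := by
        rw [mul_sub, ← Real.exp_add]; ring_nf

section IntrinsicMetric

variable {X : Type*} [MetricSpace X] {σ : ℝ → ℝ} {x y z : X}

lemma exp_neg_inv_dstar (hxy : x ≠ y) (hσ : 0 < σ (dist x y)) :
    Real.exp (-(1 / dstar σ x y)) = σ (dist x y) := by
  rw [dstar, if_neg hxy, one_div_one_div, one_div, Real.log_inv, neg_neg, Real.exp_log hσ]

lemma sigma_dist_rpow (hxy : x ≠ y) (hσ : 0 < σ (dist x y)) (t : ℝ) :
    σ (dist x y) ^ t = Real.exp (-(t / dstar σ x y)) := by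
  rw [← exp_neg_inv_dstar hxy hσ, ← Real.exp_mul]
  ring_nf

lemma dstar_pos (hxy : x ≠ y) (hσ : σ (dist x y) ∈ Ioo 0 1) : 0 < dstar σ x y := by
  rw [dstar, if_neg hxy, one_div_pos, one_div, Real.log_inv, neg_pos]
  exact Real.log_neg hσ.1 hσ.2

lemma mem_starBall_iff (hσ0 : σ 0 = 0) (hσ : ∀ r, 0 < r → σ r ∈ Ioo 0 1) {τ : ℝ} (hτ : 0 < τ) :
    z ∈ starBall σ x (1 / τ) ↔ σ (dist x z) ≤ Real.exp (-τ) := by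
  by_cases hxz : x = z
  · simp [starBall, dstar, hxz, hσ0, hτ.le, (Real.exp_pos _).le]
  · have hσz := hσ _ (dist_pos.2 hxz)
    have hL : 0 < Real.log (1 / σ (dist x z)) := by
      rw [one_div, Real.log_inv, neg_pos]
      exact Real.log_neg hσz.1 hσz.2
    rw [starBall, mem_ofPred_eq, dstar, if_neg hxz, one_div_le_one_div hL hτ, one_div,
      Real.log_inv, le_neg, Real.log_le_iff_le_exp hσz.1]

lemma starBall_inv_inv_dstar (hσmono : StrictMonoOn σ (Ici 0)) (hσ0 : σ 0 = 0)
    (hσ : ∀ r, 0 < r → σ r ∈ Ioo 0 1) (hxy : x ≠ y) :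
    starBall σ x (1 / (1 / dstar σ x y)) = closedBall x (dist x y) := by
  have hσxy := hσ _ (dist_pos.2 hxy)
  ext z
  rw [mem_starBall_iff hσ0 hσ (one_div_pos.2 (dstar_pos hxy hσxy)), exp_neg_inv_dstar hxy hσxy.1,
    hσmono.le_iff_le dist_nonneg dist_nonneg, mem_closedBall, dist_comm]

end IntrinsicMetric

section HeatKernel

variable {X : Type*} [MetricSpace X] [MeasurableSpace X] (μ : Measure X) {σ : ℝ → ℝ}
  {ν : ℝ → Measure ℝ} {t : ℝ}

lemma heatK_le (hσrange : ∀ r : ℝ, 0 ≤ r → σ r ∈ Icc 0 1)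
    (hν : ∀ t : ℝ, 0 < t → ∀ a b : ℝ, 0 ≤ a → a ≤ b →
      ν t (Ico a b) = ENNReal.ofReal (σ b ^ t - σ a ^ t))
    (ht : 0 < t) (x y : X) :
    heatK μ ν t x y ≤
      ENNReal.ofReal (1 - σ (dist x y) ^ t) * (μ (closedBall x (dist x y)))⁻¹ := by
  have hνIci : ν t (Ici (dist x y)) ≤ ENNReal.ofReal (1 - σ (dist x y) ^ t) :=
    measure_Ici_le_of_Ico (hν t ht _ · dist_nonneg) fun b hb =>
      Real.rpow_le_one (hσrange b (dist_nonneg.trans hb)).1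
        (hσrange b (dist_nonneg.trans hb)).2 ht.le
  calc heatK μ ν t x y
      ≤ ∫⁻ _ in Ici (dist x y), (μ (closedBall x (dist x y)))⁻¹ ∂(ν t) :=
        setLIntegral_mono measurable_const fun r hr =>
          ENNReal.inv_le_inv' (measure_mono (closedBall_subset_closedBall hr))
    _ = ν t (Ici (dist x y)) * (μ (closedBall x (dist x y)))⁻¹ := by
        rw [setLIntegral_const, mul_comm]
    _ ≤ _ := by gcongr

lemma ofReal_mul_specN_le_lintegral (hσmono : StrictMonoOn σ (Ici 0)) (hσ0 : σ 0 = 0)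
    (hσ : ∀ r, 0 < r → σ r ∈ Ioo 0 1) (hσlc : ∀ r : ℝ, 0 < r → ContinuousWithinAt σ (Iic r) r)
    (hσtop : Tendsto σ atTop (nhds 1))
    (hν : ∀ t : ℝ, 0 < t → ∀ a b : ℝ, 0 ≤ a → a ≤ b →
      ν t (Ico a b) = ENNReal.ofReal (σ b ^ t - σ a ^ t))
    (x : X) {τ a : ℝ} (ht : 0 < t) (hτ : 0 < τ) (ha : 0 ≤ a) :
    ENNReal.ofReal (Real.exp (-(τ * t)) - σ a ^ t) * specN μ σ x τ ≤
      ∫⁻ r in Ici a, (μ (closedBall x r))⁻¹ ∂(ν t) := by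
  set θ := Real.exp (-τ)
  have hθt : Real.exp (-(τ * t)) = θ ^ t := by rw [← Real.exp_mul, neg_mul]
  rw [hθt]
  by_cases hσa : σ a ≤ θ
  swap
  · rw [ENNReal.ofReal_of_nonpos (by
      linarith [Real.rpow_le_rpow (Real.exp_pos _).le (not_le.1 hσa).le ht.le]), zero_mul]
    exact zero_le
  have htop : ∀ᶠ r in atTop, θ < σ r :=
    hσtop.eventually (eventually_gt_nhds (Real.exp_lt_one_iff.2 (neg_lt_zero.2 hτ)))
  obtain ⟨ρ, haρ, hσρ, hρθ⟩ :=
    exists_last_le_of_leftContinuous (fun r hr => hσlc r (ha.trans_lt hr)) htop hσa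
  have hball : closedBall x ρ ⊆ starBall σ x (1 / τ) := fun z hz =>
    (mem_starBall_iff hσ0 hσ hτ).2
      ((hσmono.monotoneOn dist_nonneg (ha.trans haρ) (mem_closedBall'.1 hz)).trans hσρ)
  have hνIcc : ENNReal.ofReal (θ ^ t - σ a ^ t) ≤ ν t (Icc a ρ) :=
    ofReal_sub_le_measure_Icc (fun b hb => hν t ht a b ha (haρ.trans hb.le)) fun b hb =>
      Real.rpow_le_rpow (Real.exp_pos _).le (hρθ b hb).le ht.le
  have hmeas : Measurable fun r : ℝ => (μ (closedBall x r))⁻¹ :=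
    Antitone.measurable fun r₁ r₂ h =>
      ENNReal.inv_le_inv' (measure_mono (closedBall_subset_closedBall h))
  calc ENNReal.ofReal (θ ^ t - σ a ^ t) * specN μ σ x τ
      ≤ ν t (Icc a ρ) * specN μ σ x τ := by gcongr
    _ = ∫⁻ _ in Icc a ρ, specN μ σ x τ ∂(ν t) := by rw [setLIntegral_const, mul_comm]
    _ ≤ ∫⁻ r in Icc a ρ, (μ (closedBall x r))⁻¹ ∂(ν t) :=
        setLIntegral_mono hmeas fun r hr =>
          ENNReal.inv_le_inv' (measure_mono ((closedBall_subset_closedBall hr.2).trans hball))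
    _ ≤ ∫⁻ r in Ici a, (μ (closedBall x r))⁻¹ ∂(ν t) := lintegral_mono_set Icc_subset_Ici_self

lemma heatK_le_of_ne (hσmono : StrictMonoOn σ (Ici 0)) (hσrange : ∀ r : ℝ, 0 ≤ r → σ r ∈ Icc 0 1)
    (hσ0 : σ 0 = 0) (hσ : ∀ r, 0 < r → σ r ∈ Ioo 0 1)
    (hν : ∀ t : ℝ, 0 < t → ∀ a b : ℝ, 0 ≤ a → a ≤ b →
      ν t (Ico a b) = ENNReal.ofReal (σ b ^ t - σ a ^ t))
    (ht : 0 < t) {x y : X} (hxy : x ≠ y) :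
    heatK μ ν t x y ≤
      ENNReal.ofReal (1 - Real.exp (-(t / dstar σ x y))) * specN μ σ x (1 / dstar σ x y) := by
  rw [specN, starBall_inv_inv_dstar hσmono hσ0 hσ hxy,
    ← sigma_dist_rpow hxy (hσ _ (dist_pos.2 hxy)).1]
  exact heatK_le μ hσrange hν ht x y

lemma ofReal_mul_specN_le_heatK_of_ne (hσmono : StrictMonoOn σ (Ici 0)) (hσ0 : σ 0 = 0)
    (hσ : ∀ r, 0 < r → σ r ∈ Ioo 0 1) (hσlc : ∀ r : ℝ, 0 < r → ContinuousWithinAt σ (Iic r) r)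
    (hσtop : Tendsto σ atTop (nhds 1))
    (hν : ∀ t : ℝ, 0 < t → ∀ a b : ℝ, 0 ≤ a → a ≤ b →
      ν t (Ico a b) = ENNReal.ofReal (σ b ^ t - σ a ^ t))
    {x y : X} {τ : ℝ} (ht : 0 < t) (hτ : 0 < τ) (hxy : x ≠ y) :
    ENNReal.ofReal (Real.exp (-(τ * t)) - Real.exp (-(t / dstar σ x y))) * specN μ σ x τ ≤
      heatK μ ν t x y := by
  rw [← sigma_dist_rpow hxy (hσ _ (dist_pos.2 hxy)).1]
  exact ofReal_mul_specN_le_lintegral μ hσmono hσ0 hσ hσlc hσtop hν x ht hτ dist_nonneg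

end HeatKernel

theorem statement_9_general
    {X : Type*} [MetricSpace X]
    [MeasurableSpace X]
    (μ : Measure X)
    (σ : ℝ → ℝ)
    (hσmono : StrictMonoOn σ (Set.Ici 0))
    (hσrange : ∀ r : ℝ, 0 ≤ r → σ r ∈ Set.Icc (0:ℝ) 1)
    (hσlc : ∀ r : ℝ, 0 < r → ContinuousWithinAt σ (Set.Iic r) r)
    (hσzero : Tendsto σ (nhdsWithin 0 (Set.Ioi 0)) (nhds 0))
    (hσtop : Tendsto σ atTop (nhds 1))
    (ν : ℝ → Measure ℝ)
    (hν : ∀ t : ℝ, 0 < t → ∀ a b : ℝ, 0 ≤ a → a ≤ b →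
      ν t (Set.Ico a b) = ENNReal.ofReal (σ b ^ t - σ a ^ t))
    (x y : X) (t : ℝ) (ht : 0 < t) :
    (x ≠ y → heatK μ ν t x y ≤
        ENNReal.ofReal (t / dstar σ x y) * specN μ σ x (1 / dstar σ x y)) ∧
    (x ≠ y → t ≤ dstar σ x y →
        ENNReal.ofReal (1 / (2 * Real.exp 1) * (t / dstar σ x y)) *
            specN μ σ x (1 / (2 * dstar σ x y)) ≤ heatK μ ν t x y) ∧
    (x ≠ y → dstar σ x y ≤ t →
        ENNReal.ofReal (1 / (2 * Real.exp 1)) * specN μ σ x (1 / (2 * t)) ≤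
          heatK μ ν t x y) ∧
    ENNReal.ofReal (1 / Real.exp 1) * specN μ σ x (1 / t) ≤ heatK μ ν t x x := by
  have hσ0 := sigma_zero hσmono hσrange hσzero
  have hσ : ∀ r, 0 < r → σ r ∈ Ioo 0 1 := fun r => sigma_mem_Ioo hσmono hσrange hσ0
  have hdstar (hxy : x ≠ y) : 0 < dstar σ x y := dstar_pos hxy (hσ _ (dist_pos.2 hxy))
  have lower {τ : ℝ} (hτ : 0 < τ) (hxy : x ≠ y) :=
    ofReal_mul_specN_le_heatK_of_ne μ hσmono hσ0 hσ hσlc hσtop hν ht hτ hxy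
  refine ⟨fun hxy => ?_, fun hxy hts => ?_, fun hxy hst => ?_, ?_⟩
  · refine (heatK_le_of_ne μ hσmono hσrange hσ0 hσ hν ht hxy).trans ?_
    gcongr
    linarith [Real.add_one_le_exp (-(t / dstar σ x y))]
  · have hs := hdstar hxy
    refine le_trans ?_ (lower (one_div_pos.2 (by positivity : 0 < 2 * dstar σ x y)) hxy)
    gcongr
    rw [show 1 / (2 * dstar σ x y) * t = t / dstar σ x y / 2 by field_simp]
    exact mul_le_exp_neg_half_sub_exp_neg (by positivity) ((div_le_one hs).2 hts)
  · refine le_trans ?_ (lower (one_div_pos.2 (by positivity : 0 < 2 * t)) hxy)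
    gcongr
    rw [show 1 / (2 * t) * t = 1 / 2 by field_simp]
    have := Real.exp_le_exp.2 (neg_le_neg ((one_le_div (hdstar hxy)).2 hst))
    linarith [mul_le_exp_neg_half_sub_exp_neg zero_le_one le_rfl]
  · rw [heatK, dist_self]
    have := ofReal_mul_specN_le_lintegral μ hσmono hσ0 hσ hσlc hσtop hν x ht
      (one_div_pos.2 ht) le_rfl
    rwa [hσ0, Real.zero_rpow ht.ne', sub_zero, one_div_mul_cancel ht.ne', Real.exp_neg,
      ← one_div] at this

theorem statement_9
    {X : Type*} [MetricSpace X] [TopologicalSpace.SeparableSpace X]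
    [MeasurableSpace X] [BorelSpace X]
    (hd : ∀ x y z : X, dist x z ≤ max (dist x y) (dist y z))
    (hcb : ∀ (x : X) (r : ℝ), IsCompact (closedBall x r))
    (μ : Measure X)
    (hμpos : ∀ (x : X) (r : ℝ), 0 < r → 0 < μ (closedBall x r))
    (hμfin : ∀ (x : X) (r : ℝ), 0 < r → μ (closedBall x r) < ⊤)
    (σ : ℝ → ℝ)
    (hσmono : StrictMonoOn σ (Set.Ici 0))
    (hσrange : ∀ r : ℝ, 0 ≤ r → σ r ∈ Set.Icc (0:ℝ) 1)
    (hσlc : ∀ r : ℝ, 0 < r → ContinuousWithinAt σ (Set.Iic r) r)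
    (hσzero : Tendsto σ (nhdsWithin 0 (Set.Ioi 0)) (nhds 0))
    (hσtop : Tendsto σ atTop (nhds 1))
    (ν : ℝ → Measure ℝ)
    (hν : ∀ t : ℝ, 0 < t → ∀ a b : ℝ, 0 ≤ a → a ≤ b →
      ν t (Set.Ico a b) = ENNReal.ofReal (σ b ^ t - σ a ^ t))
    (hνneg : ∀ t : ℝ, 0 < t → ν t (Set.Iio 0) = 0)
    (x y : X) (t : ℝ) (ht : 0 < t) :
    (x ≠ y → heatK μ ν t x y ≤
        ENNReal.ofReal (t / dstar σ x y) * specN μ σ x (1 / dstar σ x y)) ∧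
    (x ≠ y → t ≤ dstar σ x y →
        ENNReal.ofReal (1 / (2 * Real.exp 1) * (t / dstar σ x y)) *
            specN μ σ x (1 / (2 * dstar σ x y)) ≤ heatK μ ν t x y) ∧
    (x ≠ y → dstar σ x y ≤ t →
        ENNReal.ofReal (1 / (2 * Real.exp 1)) * specN μ σ x (1 / (2 * t)) ≤
          heatK μ ν t x y) ∧
    ENNReal.ofReal (1 / Real.exp 1) * specN μ σ x (1 / t) ≤ heatK μ ν t x x :=
  statement_9_general μ σ hσmono hσrange hσlc hσzero hσtop ν hν x y t ht
end

section
/- For each fixed x ∈ X the following two properties are equivalent: (i) there is a constant C > 0 such that p(t,x,x) ≤ C·N(x,1/t) for all t > 0; (ii) N(x,·) is doubling, i.e. there is a constant D such that N(x,2τ) ≤ D·N(x,τ) for all τ > 0. -/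
open MeasureTheory Metric Filter
open scoped ENNReal Classical

/-!
Let `ρ(c)` be the radius with `{r ≥ 0 | σ r ≤ c} = [0, ρ(c)]`; then
`N(x,τ) = μ(B_{ρ(e^{-τ})}(x))⁻¹`, and `p(t,x,x)` is the `dσ^t`-average of the decreasing function
`r ↦ μ(B_r(x))⁻¹`.

(i) ⇒ (ii): `dσ^t` gives `[0, ρ(e^{-2/t})]` mass at least `e^{-2}`, and there the integrand is at
least `N(x,2/t)`; so `e^{-2} N(x,2τ) ≤ p(1/τ,x,x) ≤ C N(x,τ)`.

(ii) ⇒ (i): cut `(0,∞)` at the decreasing radii `ρ_k = ρ(e^{-2^k/t})`. Beyond `ρ_k` the integrand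
is at most `N(x,2^k/t) ≤ D^k N(x,1/t)`, while `[0, ρ_k)` has `dσ^t`-mass at most `e^{-2^k}`; the
doubly exponential decay beats `D^k`.
-/

open Set

theorem tendsto_exp_neg_two_pow_mul {τ : ℝ} (hτ : 0 < τ) :
    Tendsto (fun k : ℕ => Real.exp (-(2 ^ k * τ))) atTop (nhds 0) :=
  Real.tendsto_exp_atBot.comp <| tendsto_neg_atTop_atBot.comp <|
    (tendsto_pow_atTop_atTop_of_one_lt one_lt_two).atTop_mul_const hτ

theorem summable_pow_mul_exp_neg_two_pow {D : ℝ} (hD : 0 ≤ D) :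
    Summable fun k : ℕ => D ^ (k + 1) * Real.exp (-2 ^ k) := by
  refine summable_of_ratio_norm_eventually_le (r := 1 / 2) (by norm_num) ?_
  have hsmall : Tendsto (fun k : ℕ => D * Real.exp (-2 ^ k)) atTop (nhds 0) := by
    simpa using (tendsto_exp_neg_two_pow_mul one_pos).const_mul D
  filter_upwards [hsmall.eventually (eventually_le_nhds (by norm_num : (0 : ℝ) < 1 / 2))]
    with k hk
  have hstep : D ^ (k + 1 + 1) * Real.exp (-2 ^ (k + 1)) =
      D * Real.exp (-2 ^ k) * (D ^ (k + 1) * Real.exp (-2 ^ k)) := by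
    rw [pow_succ 2 k, show -(2 ^ k * 2 : ℝ) = -2 ^ k + -2 ^ k by ring, Real.exp_add]
    ring
  rw [Real.norm_of_nonneg (by positivity), Real.norm_of_nonneg (by positivity), hstep]
  exact mul_le_mul_of_nonneg_right hk (by positivity)

theorem le_pow_mul_of_le_two_mul {φ : ℝ → ℝ≥0∞} {K : ℝ≥0∞}
    (h : ∀ τ, 0 < τ → φ (2 * τ) ≤ K * φ τ) (k : ℕ) {τ : ℝ} (hτ : 0 < τ) :
    φ (2 ^ k * τ) ≤ K ^ k * φ τ := by
  induction k with
  | zero => simp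
  | succ k ih =>
    calc φ (2 ^ (k + 1) * τ) = φ (2 * (2 ^ k * τ)) := by
          rw [pow_succ, mul_comm _ (2 : ℝ), mul_assoc]
      _ ≤ K * φ (2 ^ k * τ) := h _ (by positivity)
      _ ≤ K * (K ^ k * φ τ) := by gcongr
      _ = K ^ (k + 1) * φ τ := by rw [pow_succ', mul_assoc]

theorem setLIntegral_le_of_monotone_cover {α : Type*} [MeasurableSpace α] {m : Measure α}
    {s : Set α} {f : α → ℝ≥0∞} {G : ℕ → Set α} {a : ℕ → ℝ≥0∞} (hG : Monotone G)
    (hGm : ∀ k, MeasurableSet (G k)) (hs : s ⊆ ⋃ k, G k) (hf : ∀ k, ∀ x ∈ G k, f x ≤ a k) :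
    ∫⁻ x in s, f x ∂m ≤ a 0 * m (G 0) + ∑' k, a (k + 1) * m (G (k + 1) \ G k) := by
  calc ∫⁻ x in s, f x ∂m ≤ ∫⁻ x in ⋃ k, disjointed G k, f x ∂m :=
        lintegral_mono_set (by rwa [iUnion_disjointed])
    _ ≤ ∑' k, ∫⁻ x in disjointed G k, f x ∂m := lintegral_iUnion_le _ _
    _ ≤ ∑' k, a k * m (disjointed G k) := ENNReal.tsum_le_tsum fun k =>
        (setLIntegral_mono' (MeasurableSet.disjointed hGm k) fun x hx =>
          hf k x (disjointed_subset G k hx)).trans_eq (setLIntegral_const _ _)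
    _ = a 0 * m (G 0) + ∑' k, a (k + 1) * m (G (k + 1) \ G k) := by
        rw [tsum_eq_zero_add' ENNReal.summable, disjointed_zero]
        congr 2 with k
        rw [← Order.succ_eq_add_one, hG.disjointed_succ (not_isMax k)]

theorem tendsto_measure_Ico_nhdsGT (m : Measure ℝ) {a ρ : ℝ}
    (hfin : ∃ b > ρ, m (Ico a b) ≠ ∞) :
    Tendsto (fun b => m (Ico a b)) (nhdsWithin ρ (Ioi ρ)) (nhds (m (Icc a ρ))) := by
  have hInter : ⋂ b > ρ, Ico a b = Icc a ρ := by
    ext r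
    simp only [mem_iInter, mem_Ico, mem_Icc]
    refine ⟨fun h => ⟨(h (ρ + 1) (lt_add_one ρ)).1,
      le_of_forall_gt_imp_ge_of_dense fun b hb => (h b hb).2.le⟩,
      fun h b hb => ⟨h.1, h.2.trans_lt hb⟩⟩
  rw [← hInter]
  exact tendsto_measure_biInter_gt (fun _ _ => measurableSet_Ico.nullMeasurableSet)
    (fun _ _ _ hij => Ico_subset_Ico_right hij) hfin

/-- `m` agrees with the Lebesgue–Stieltjes measure `dσ^t` on `[0, ∞)`. -/
def IsStieltjesMeasureOfPow (m : Measure ℝ) (σ : ℝ → ℝ) (t : ℝ) : Prop :=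
  ∀ a b, 0 ≤ a → a ≤ b → m (Ico a b) = ENNReal.ofReal (σ b ^ t - σ a ^ t)

structure IsDistanceDistribution (σ : ℝ → ℝ) : Prop where
  strictMonoOn : StrictMonoOn σ (Ici 0)
  mem_Icc : ∀ r, 0 ≤ r → σ r ∈ Icc (0 : ℝ) 1
  continuousWithinAt_Iic : ∀ r, 0 < r → ContinuousWithinAt σ (Iic r) r
  tendsto_nhdsGT_zero : Tendsto σ (nhdsWithin 0 (Ioi 0)) (nhds 0)
  tendsto_atTop : Tendsto σ atTop (nhds 1)

namespace IsDistanceDistribution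

variable {σ : ℝ → ℝ}

theorem map_zero (hσ : IsDistanceDistribution σ) : σ 0 = 0 := by
  refine le_antisymm (ge_of_tendsto hσ.tendsto_nhdsGT_zero ?_) (hσ.mem_Icc 0 le_rfl).1
  filter_upwards [self_mem_nhdsWithin] with r (hr : (0 : ℝ) < r)
  exact hσ.strictMonoOn.monotoneOn (mem_Ici.2 le_rfl) (mem_Ici.2 hr.le) hr.le

theorem pos (hσ : IsDistanceDistribution σ) {r : ℝ} (hr : 0 < r) : 0 < σ r :=
  hσ.map_zero ▸ hσ.strictMonoOn (mem_Ici.2 le_rfl) (mem_Ici.2 hr.le) hr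

theorem lt_one (hσ : IsDistanceDistribution σ) {r : ℝ} (hr : 0 ≤ r) : σ r < 1 :=
  (hσ.strictMonoOn hr (hr.trans (le_add_of_nonneg_right zero_le_one)) (lt_add_one r)).trans_le
    (hσ.mem_Icc _ (by linarith)).2

/-- Left continuity of `σ` is what makes the sublevel set `{r ≥ 0 | σ r ≤ c}` closed. -/
theorem exists_pos_forall_le_iff_le (hσ : IsDistanceDistribution σ) {c : ℝ} (hc0 : 0 < c)
    (hc1 : c < 1) : ∃ ρ, 0 < ρ ∧ ∀ r, 0 ≤ r → (σ r ≤ c ↔ r ≤ ρ) := by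
  have hmono := hσ.strictMonoOn.monotoneOn
  set S := {r : ℝ | 0 ≤ r ∧ σ r ≤ c}
  obtain ⟨r₀, hr₀c, hr₀⟩ := ((hσ.tendsto_nhdsGT_zero.eventually (eventually_lt_nhds hc0)).and
    self_mem_nhdsWithin).exists
  have hr₀S : r₀ ∈ S := ⟨le_of_lt hr₀, hr₀c.le⟩
  obtain ⟨R, hRc, hR⟩ := ((hσ.tendsto_atTop.eventually (eventually_gt_nhds hc1)).and
    (eventually_ge_atTop 0)).exists
  have hbdd : BddAbove S := ⟨R, fun s hs => le_of_not_gt fun hRs =>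
    (hRc.trans_le (hmono hR (hR.trans hRs.le) hRs.le)).not_ge hs.2⟩
  have hρ : 0 < sSup S := lt_of_lt_of_le hr₀ (le_csSup hbdd hr₀S)
  have hσρ : σ (sSup S) ≤ c := by
    refine le_of_tendsto ((hσ.continuousWithinAt_Iic _ hρ).mono Iio_subset_Iic_self) ?_
    filter_upwards [Ioo_mem_nhdsLT hρ] with r hr
    obtain ⟨s, hs, hrs⟩ := exists_lt_of_lt_csSup ⟨r₀, hr₀S⟩ hr.2
    exact (hmono hr.1.le (hr.1.le.trans hrs.le) hrs.le).trans hs.2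
  exact ⟨sSup S, hρ, fun r hr => ⟨fun hrc => le_csSup hbdd ⟨hr, hrc⟩,
    fun hrρ => (hmono hr hρ.le hrρ).trans hσρ⟩⟩

theorem exists_antitone_radii (hσ : IsDistanceDistribution σ) {τ : ℝ} (hτ : 0 < τ) :
    ∃ ρ : ℕ → ℝ, Antitone ρ ∧ (∀ k, 0 < ρ k) ∧
      (∀ k r, 0 ≤ r → (σ r ≤ Real.exp (-(2 ^ k * τ)) ↔ r ≤ ρ k)) ∧ Ioi 0 ⊆ ⋃ k, Ici (ρ k) := by
  have hlevel (k : ℕ) : ∃ ρ, 0 < ρ ∧ ∀ r, 0 ≤ r → (σ r ≤ Real.exp (-(2 ^ k * τ)) ↔ r ≤ ρ) :=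
    hσ.exists_pos_forall_le_iff_le (Real.exp_pos _)
      (Real.exp_lt_one_iff.2 (neg_neg_of_pos (by positivity)))
  choose ρ hρ hlev using hlevel
  refine ⟨ρ, antitone_nat_of_succ_le fun k => ?_, hρ, hlev, fun r (hr : 0 < r) => ?_⟩
  · refine (hlev k _ (hρ _).le).1 (((hlev (k + 1) _ (hρ _).le).2 le_rfl).trans ?_)
    exact Real.exp_le_exp.2 (neg_le_neg (by gcongr; exacts [one_le_two, k.le_succ]))
  · obtain ⟨k, hk⟩ := ((tendsto_exp_neg_two_pow_mul hτ).eventually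
      (eventually_lt_nhds (hσ.pos hr))).exists
    exact mem_iUnion.2 ⟨k, le_of_not_ge fun h => hk.not_ge ((hlev k r hr.le).2 h)⟩

variable {m : Measure ℝ} {t : ℝ}

theorem measure_Ico_zero (hσ : IsDistanceDistribution σ) (ht : 0 < t)
    (hm : IsStieltjesMeasureOfPow m σ t) {b : ℝ} (hb : 0 ≤ b) :
    m (Ico 0 b) = ENNReal.ofReal (σ b ^ t) := by
  rw [hm 0 b le_rfl hb, hσ.map_zero, Real.zero_rpow ht.ne', sub_zero]

theorem tendsto_ofReal_rpow_measure_Icc (hσ : IsDistanceDistribution σ) (ht : 0 < t)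
    (hm : IsStieltjesMeasureOfPow m σ t) {ρ : ℝ} (hρ : 0 ≤ ρ) :
    Tendsto (fun b => ENNReal.ofReal (σ b ^ t)) (nhdsWithin ρ (Ioi ρ)) (nhds (m (Icc 0 ρ))) := by
  refine (tendsto_measure_Ico_nhdsGT m ⟨ρ + 1, lt_add_one ρ, ?_⟩).congr' ?_
  · rw [hσ.measure_Ico_zero ht hm (by linarith)]
    exact ENNReal.ofReal_ne_top
  · filter_upwards [self_mem_nhdsWithin] with b (hb : ρ < b)
    exact hσ.measure_Ico_zero ht hm (hρ.trans hb.le)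

theorem measure_singleton_zero (hσ : IsDistanceDistribution σ) (ht : 0 < t)
    (hm : IsStieltjesMeasureOfPow m σ t) : m {0} = 0 := by
  have hcont : ContinuousAt (fun y : ℝ => ENNReal.ofReal (y ^ t)) 0 :=
    ENNReal.continuous_ofReal.continuousAt.comp (Real.continuousAt_rpow_const _ _ (Or.inr ht.le))
  have hlim := hcont.tendsto.comp hσ.tendsto_nhdsGT_zero
  rw [Real.zero_rpow ht.ne', ENNReal.ofReal_zero] at hlim
  rw [← Icc_self]
  exact tendsto_nhds_unique (hσ.tendsto_ofReal_rpow_measure_Icc ht hm le_rfl) hlim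

theorem measure_Ici_zero_le_one (hσ : IsDistanceDistribution σ) (ht : 0 < t)
    (hm : IsStieltjesMeasureOfPow m σ t) : m (Ici 0) ≤ 1 := by
  refine le_of_tendsto (tendsto_measure_Ico_atTop m 0) ?_
  filter_upwards [eventually_ge_atTop 0] with b hb
  rw [hσ.measure_Ico_zero ht hm hb]
  exact ENNReal.ofReal_le_one.2 (Real.rpow_le_one (hσ.mem_Icc b hb).1 (hσ.mem_Icc b hb).2 ht.le)

theorem ofReal_rpow_le_measure_Icc (hσ : IsDistanceDistribution σ) (ht : 0 < t)
    (hm : IsStieltjesMeasureOfPow m σ t) {c ρ : ℝ} (hc : 0 ≤ c) (hρ : 0 ≤ ρ)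
    (h : ∀ b > ρ, c ≤ σ b) : ENNReal.ofReal (c ^ t) ≤ m (Icc 0 ρ) := by
  refine ge_of_tendsto (hσ.tendsto_ofReal_rpow_measure_Icc ht hm hρ) ?_
  filter_upwards [self_mem_nhdsWithin] with b (hb : ρ < b)
  exact ENNReal.ofReal_le_ofReal (Real.rpow_le_rpow hc (h b hb) ht.le)

theorem measure_Ico_zero_le (hσ : IsDistanceDistribution σ) (ht : 0 < t)
    (hm : IsStieltjesMeasureOfPow m σ t) {c ρ : ℝ} (hρ : 0 ≤ ρ) (h : σ ρ ≤ c) :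
    m (Ico 0 ρ) ≤ ENNReal.ofReal (c ^ t) := by
  rw [hσ.measure_Ico_zero ht hm hρ]
  exact ENNReal.ofReal_le_ofReal (Real.rpow_le_rpow (hσ.mem_Icc ρ hρ).1 h ht.le)

end IsDistanceDistribution

section HeatKernel

variable {X : Type*} [MetricSpace X] {σ : ℝ → ℝ}

/-- `B*_{1/τ}(x) = {y | σ(d(x,y)) ≤ e^{-τ}}`, a `d`-ball of radius `ρ` by `hlev`. -/
theorem starBall_one_div_eq_closedBall (hσ : IsDistanceDistribution σ) (x : X) {τ ρ : ℝ}
    (hτ : 0 < τ) (hlev : ∀ r, 0 ≤ r → (σ r ≤ Real.exp (-τ) ↔ r ≤ ρ)) :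
    starBall σ x (1 / τ) = closedBall x ρ := by
  ext y
  simp only [starBall, dstar, mem_ofPred_eq, mem_closedBall, dist_comm y x]
  split_ifs with hxy
  · subst hxy
    rw [dist_self, ← hlev 0 le_rfl, hσ.map_zero]
    exact iff_of_true (by positivity) (Real.exp_pos _).le
  · have hd := dist_pos.2 hxy
    have hσd := hσ.pos hd
    have hlog : 0 < Real.log (1 / σ (dist x y)) :=
      Real.log_pos (one_lt_one_div hσd (hσ.lt_one hd.le))
    rw [← hlev _ hd.le, one_div_le_one_div hlog hτ, one_div, Real.log_inv, le_neg,
      Real.log_le_iff_le_exp hσd]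

variable [MeasurableSpace X] {μ : Measure X} {ν : ℝ → Measure ℝ}

theorem specN_two_mul_le_heatK (hσ : IsDistanceDistribution σ)
    (hν : ∀ t, 0 < t → IsStieltjesMeasureOfPow (ν t) σ t) (x : X) {τ : ℝ} (hτ : 0 < τ) :
    specN μ σ x (2 * τ) ≤ ENNReal.ofReal (Real.exp 2) * heatK μ ν (1 / τ) x x := by
  have ht : 0 < 1 / τ := one_div_pos.2 hτ
  obtain ⟨ρ, hρ, hlev⟩ := hσ.exists_pos_forall_le_iff_le (Real.exp_pos (-(2 * τ)))
    (Real.exp_lt_one_iff.2 (by linarith))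
  have hmass : ENNReal.ofReal (Real.exp (-2)) ≤ ν (1 / τ) (Icc 0 ρ) := by
    have hpow : Real.exp (-(2 * τ)) ^ (1 / τ) = Real.exp (-2) := by
      rw [← Real.exp_mul]
      field_simp
    rw [← hpow]
    exact hσ.ofReal_rpow_le_measure_Icc ht (hν _ ht) (Real.exp_pos _).le hρ.le
      fun b hb => le_of_not_ge fun h => hb.not_ge ((hlev b (hρ.le.trans hb.le)).1 h)
  have hlower : ν (1 / τ) (Icc 0 ρ) * specN μ σ x (2 * τ) ≤ heatK μ ν (1 / τ) x x := by
    rw [specN, starBall_one_div_eq_closedBall hσ x (by positivity) hlev, heatK, dist_self]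
    calc _ = ∫⁻ _ in Icc 0 ρ, (μ (closedBall x ρ))⁻¹ ∂ν (1 / τ) := by
          rw [setLIntegral_const, mul_comm]
      _ ≤ ∫⁻ r in Icc 0 ρ, (μ (closedBall x r))⁻¹ ∂ν (1 / τ) :=
          setLIntegral_mono' measurableSet_Icc fun r hr =>
            ENNReal.inv_le_inv.2 (measure_mono (closedBall_subset_closedBall hr.2))
      _ ≤ _ := lintegral_mono_set Icc_subset_Ici_self
  calc specN μ σ x (2 * τ) = ENNReal.ofReal (Real.exp 2) *
        (ENNReal.ofReal (Real.exp (-2)) * specN μ σ x (2 * τ)) := by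
        rw [← mul_assoc, ← ENNReal.ofReal_mul (Real.exp_pos _).le, ← Real.exp_add]
        norm_num
    _ ≤ _ := by
        gcongr
        exact (mul_le_mul_left hmass _).trans hlower

theorem heatK_le_of_doubling (hσ : IsDistanceDistribution σ)
    (hν : ∀ t, 0 < t → IsStieltjesMeasureOfPow (ν t) σ t) (x : X) {D : ℝ} (hD : 0 ≤ D)
    (hdb : ∀ τ, 0 < τ → specN μ σ x (2 * τ) ≤ ENNReal.ofReal D * specN μ σ x τ)
    {t : ℝ} (ht : 0 < t) :
    heatK μ ν t x x ≤ ENNReal.ofReal (1 + ∑' k : ℕ, D ^ (k + 1) * Real.exp (-2 ^ k)) *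
      specN μ σ x (1 / t) := by
  set τ := 1 / t
  have hτ : 0 < τ := one_div_pos.2 ht
  have hτt : τ * t = 1 := one_div_mul_cancel ht.ne'
  obtain ⟨ρ, hρanti, hρ, hlev, hcover⟩ := hσ.exists_antitone_radii hτ
  have hball (k : ℕ) (r : ℝ) (hr : r ∈ Ici (ρ k)) :
      (μ (closedBall x r))⁻¹ ≤ ENNReal.ofReal D ^ k * specN μ σ x τ :=
    calc (μ (closedBall x r))⁻¹ ≤ (μ (closedBall x (ρ k)))⁻¹ :=
          ENNReal.inv_le_inv.2 (measure_mono (closedBall_subset_closedBall hr))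
      _ = specN μ σ x (2 ^ k * τ) := by
          rw [specN, starBall_one_div_eq_closedBall hσ x (by positivity) (hlev k)]
      _ ≤ _ := le_pow_mul_of_le_two_mul hdb k hτ
  have hmass (k : ℕ) : ν t (Ici (ρ (k + 1)) \ Ici (ρ k)) ≤ ENNReal.ofReal (Real.exp (-2 ^ k)) :=
    calc _ ≤ ν t (Ico 0 (ρ k)) := measure_mono fun r hr => ⟨(hρ _).le.trans hr.1, not_le.1 hr.2⟩
      _ ≤ ENNReal.ofReal (Real.exp (-(2 ^ k * τ)) ^ t) :=
          hσ.measure_Ico_zero_le ht (hν t ht) (hρ k).le ((hlev k _ (hρ k).le).2 le_rfl)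
      _ = _ := by rw [← Real.exp_mul, neg_mul, mul_assoc, hτt, mul_one]
  have hE := summable_pow_mul_exp_neg_two_pow hD
  set N := specN μ σ x τ
  calc heatK μ ν t x x = ∫⁻ r in Ioi 0, (μ (closedBall x r))⁻¹ ∂ν t := by
        rw [heatK, dist_self, setLIntegral_congr
          (Ioi_ae_eq_Ici' (hσ.measure_singleton_zero ht (hν t ht))).symm]
    _ ≤ ENNReal.ofReal D ^ 0 * N * ν t (Ici (ρ 0)) +
        ∑' k, ENNReal.ofReal D ^ (k + 1) * N * ν t (Ici (ρ (k + 1)) \ Ici (ρ k)) :=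
        setLIntegral_le_of_monotone_cover (fun _ _ hij => Ici_subset_Ici.2 (hρanti hij))
          (fun _ => measurableSet_Ici) hcover hball
    _ ≤ N * 1 + ∑' k, ENNReal.ofReal D ^ (k + 1) * N * ENNReal.ofReal (Real.exp (-2 ^ k)) := by
        rw [pow_zero, one_mul]
        gcongr with k
        · exact (measure_mono (Ici_subset_Ici.2 (hρ 0).le)).trans
            (hσ.measure_Ici_zero_le_one ht (hν t ht))
        · exact hmass k
    _ = _ := by
        simp_rw [mul_right_comm _ N, ← ENNReal.ofReal_pow hD,
          ← ENNReal.ofReal_mul (pow_nonneg hD _)]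
        rw [ENNReal.tsum_mul_right, ← ENNReal.ofReal_tsum_of_nonneg (fun _ => by positivity) hE,
          ENNReal.ofReal_add zero_le_one (tsum_nonneg fun _ => by positivity), ENNReal.ofReal_one]
        ring

end HeatKernel

theorem statement_10_general
    {X : Type*} [MetricSpace X]
    [MeasurableSpace X]
    (μ : Measure X)
    (σ : ℝ → ℝ)
    (hσmono : StrictMonoOn σ (Set.Ici 0))
    (hσrange : ∀ r : ℝ, 0 ≤ r → σ r ∈ Set.Icc (0:ℝ) 1)
    (hσlc : ∀ r : ℝ, 0 < r → ContinuousWithinAt σ (Set.Iic r) r)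
    (hσzero : Tendsto σ (nhdsWithin 0 (Set.Ioi 0)) (nhds 0))
    (hσtop : Tendsto σ atTop (nhds 1))
    (ν : ℝ → Measure ℝ)
    (hν : ∀ t : ℝ, 0 < t → ∀ a b : ℝ, 0 ≤ a → a ≤ b →
      ν t (Set.Ico a b) = ENNReal.ofReal (σ b ^ t - σ a ^ t))
    (x : X) :
    (∃ C : ℝ, 0 < C ∧ ∀ t : ℝ, 0 < t →
        heatK μ ν t x x ≤ ENNReal.ofReal C * specN μ σ x (1 / t)) ↔
    (∃ D : ℝ, 0 < D ∧ ∀ τ : ℝ, 0 < τ →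
        specN μ σ x (2 * τ) ≤ ENNReal.ofReal D * specN μ σ x τ) := by
  have hσ : IsDistanceDistribution σ := ⟨hσmono, hσrange, hσlc, hσzero, hσtop⟩
  constructor
  · rintro ⟨C, hC, hheat⟩
    refine ⟨Real.exp 2 * C, by positivity, fun τ hτ => ?_⟩
    calc specN μ σ x (2 * τ) ≤ ENNReal.ofReal (Real.exp 2) * heatK μ ν (1 / τ) x x :=
          specN_two_mul_le_heatK hσ hν x hτ
      _ ≤ ENNReal.ofReal (Real.exp 2) * (ENNReal.ofReal C * specN μ σ x τ) := by
          gcongr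
          simpa only [one_div_one_div] using hheat (1 / τ) (by positivity)
      _ = ENNReal.ofReal (Real.exp 2 * C) * specN μ σ x τ := by
          rw [ENNReal.ofReal_mul (Real.exp_pos 2).le, mul_assoc]
  · rintro ⟨D, hD, hdb⟩
    exact ⟨_, by positivity, fun t ht => heatK_le_of_doubling hσ hν x hD.le hdb ht⟩

theorem statement_10
    {X : Type*} [MetricSpace X] [TopologicalSpace.SeparableSpace X]
    [MeasurableSpace X] [BorelSpace X]
    (hd : ∀ x y z : X, dist x z ≤ max (dist x y) (dist y z))
    (hcb : ∀ (x : X) (r : ℝ), IsCompact (closedBall x r))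
    (μ : Measure X)
    (hμpos : ∀ (x : X) (r : ℝ), 0 < r → 0 < μ (closedBall x r))
    (hμfin : ∀ (x : X) (r : ℝ), 0 < r → μ (closedBall x r) < ⊤)
    (σ : ℝ → ℝ)
    (hσmono : StrictMonoOn σ (Set.Ici 0))
    (hσrange : ∀ r : ℝ, 0 ≤ r → σ r ∈ Set.Icc (0:ℝ) 1)
    (hσlc : ∀ r : ℝ, 0 < r → ContinuousWithinAt σ (Set.Iic r) r)
    (hσzero : Tendsto σ (nhdsWithin 0 (Set.Ioi 0)) (nhds 0))
    (hσtop : Tendsto σ atTop (nhds 1))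
    (ν : ℝ → Measure ℝ)
    (hν : ∀ t : ℝ, 0 < t → ∀ a b : ℝ, 0 ≤ a → a ≤ b →
      ν t (Set.Ico a b) = ENNReal.ofReal (σ b ^ t - σ a ^ t))
    (hνneg : ∀ t : ℝ, 0 < t → ν t (Set.Iio 0) = 0)
    (x : X) :
    (∃ C : ℝ, 0 < C ∧ ∀ t : ℝ, 0 < t →
        heatK μ ν t x x ≤ ENNReal.ofReal C * specN μ σ x (1 / t)) ↔
    (∃ D : ℝ, 0 < D ∧ ∀ τ : ℝ, 0 < τ →
        specN μ σ x (2 * τ) ≤ ENNReal.ofReal D * specN μ σ x τ) :=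
  statement_10_general μ σ hσmono hσrange hσlc hσzero hσtop ν hν x
end
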